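/- arXiv:2207.02591 — 5 statements merged into one kernel-verified Lean document; each statement's English description precedes it below -/
import Mathlib

section
/- Let N ≥ 1 be an integer and let a, b: ℤ → ℂ satisfy a(r) = a(r+N) + b(r) for all r ∈ ℤ, a(r) → 0 as r → +∞ and as r → -∞, and assume (b(r+lN))_{l∈ℤ} is absolutely summable for each r. Then for every r ∈ ℤ one has ∑_{l∈ℤ} b(r+lN) = 0, and moreover a(r) = ∑_{l∈ℤ} sg(r,l)·b(r+lN), where sg(r,l) = (sgn*(r)+sgn*(l))/2 with sgn*(x) = 1 if x ≥ 0 and -1 if x < 0. -/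
/-!
Along the progression `r + l N` put `c l = a (r + l N)`. The recurrence says
`b (r + l N) = c l - c (l + 1)`, so both half-series telescope: the terms with `l ≥ 0` sum to
`c 0 = a r` because `c → 0` at `+∞`, and those with `l < 0` sum to `-a r` because `c → 0` at `-∞`.
Hence the full sum vanishes, and writing `sg r l = sgn* r / 2 + sgn* l / 2` the weighted sum is
`0 + (a r + a r) / 2 = a r`.
-/

open Filter Topology

def sgnStar (r : ℤ) : ℤ := if 0 ≤ r then 1 else -1

/-- `sg(r,l) = (sgn*(r)+sgn*(l))/2` as a complex number. -/
noncomputable def sg (r l : ℤ) : ℂ := ((sgnStar r + sgnStar l : ℤ) : ℂ) / 2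

theorem sgnStar_natCast (n : ℕ) : sgnStar n = 1 := if_pos n.cast_nonneg

theorem sgnStar_neg_add_one (n : ℕ) : sgnStar (-(n + 1)) = -1 := if_neg (by omega)

section Telescoping

variable {G : Type*} [AddCommGroup G] [TopologicalSpace G] [IsTopologicalAddGroup G] [T2Space G]

theorem hasSum_sub_succ_of_tendsto_zero {f : ℕ → G} (hs : Summable fun n => f n - f (n + 1))
    (hf : Tendsto f atTop (𝓝 0)) : HasSum (fun n => f n - f (n + 1)) (f 0) := by
  have hpartial : Tendsto (fun n => f 0 - f n) atTop (𝓝 (f 0)) := by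
    simpa using tendsto_const_nhds.sub hf
  convert hs.hasSum
  refine tendsto_nhds_unique hpartial ?_
  simpa only [Finset.sum_range_sub'] using hs.hasSum.tendsto_sum_nat

end Telescoping

section IntTelescoping

variable {G : Type*} [AddCommGroup G] [UniformSpace G] [IsUniformAddGroup G] [CompleteSpace G]
  [T2Space G] {c : ℤ → G}

theorem hasSum_natCast_sub_succ (hs : Summable fun l => c l - c (l + 1))
    (htop : Tendsto c atTop (𝓝 0)) : HasSum (fun n : ℕ => c n - c (n + 1)) (c 0) := by
  have hs' : Summable fun n : ℕ => c n - c (n + 1) := by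
    simpa [Function.comp_def] using hs.comp_injective Nat.cast_injective
  have := hasSum_sub_succ_of_tendsto_zero (f := fun n : ℕ => c n) (by exact_mod_cast hs')
    (htop.comp tendsto_natCast_atTop_atTop)
  exact_mod_cast this

theorem hasSum_neg_add_one_sub_succ (hs : Summable fun l => c l - c (l + 1))
    (hbot : Tendsto c atBot (𝓝 0)) :
    HasSum (fun n : ℕ => c (-(n + 1)) - c (-(n + 1) + 1)) (-c 0) := by
  have hs' : Summable fun n : ℕ => c (-n) - c (-(n + 1 : ℕ)) := by
    have := (hs.comp_injective (i := fun n : ℕ => -((n : ℤ) + 1))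
      fun m n h => by simpa using h).neg
    convert this using 2 with n
    simp
  have := hasSum_sub_succ_of_tendsto_zero (f := fun n : ℕ => c (-n)) hs'
    (hbot.comp (tendsto_neg_atTop_atBot.comp tendsto_natCast_atTop_atTop))
  convert this.neg using 1
  · ext n
    simp
  · simp

variable (hs : Summable fun l => c l - c (l + 1)) (htop : Tendsto c atTop (𝓝 0))
  (hbot : Tendsto c atBot (𝓝 0))
include hs htop hbot

theorem hasSum_int_sub_succ : HasSum (fun l => c l - c (l + 1)) 0 := by
  rw [← add_neg_cancel (c 0)]
  exact HasSum.of_nat_of_neg_add_one (f := fun l => c l - c (l + 1))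
    (hasSum_natCast_sub_succ hs htop) (hasSum_neg_add_one_sub_succ hs hbot)

theorem hasSum_int_sgnStar_smul_sub_succ :
    HasSum (fun l => sgnStar l • (c l - c (l + 1))) (2 • c 0) := by
  have hnonneg : HasSum (fun n : ℕ => sgnStar n • (c n - c (n + 1))) (c 0) := by
    simpa only [sgnStar_natCast, one_smul] using hasSum_natCast_sub_succ hs htop
  have hneg :
      HasSum (fun n : ℕ => sgnStar (-(n + 1)) • (c (-(n + 1)) - c (-(n + 1) + 1))) (c 0) := by
    simpa only [sgnStar_neg_add_one, neg_smul, one_smul, neg_neg] using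
      (hasSum_neg_add_one_sub_succ hs hbot).neg
  rw [two_smul]
  exact HasSum.of_nat_of_neg_add_one (f := fun l => sgnStar l • (c l - c (l + 1))) hnonneg hneg

end IntTelescoping

theorem hasSum_sg_mul_sub_succ {c : ℤ → ℂ} (hs : Summable fun l => c l - c (l + 1))
    (htop : Tendsto c atTop (𝓝 0)) (hbot : Tendsto c atBot (𝓝 0)) (r : ℤ) :
    HasSum (fun l => sg r l * (c l - c (l + 1))) (c 0) := by
  have hsplit (l : ℤ) : sg r l * (c l - c (l + 1)) =
      sgnStar r / 2 * (c l - c (l + 1)) + 1 / 2 * sgnStar l • (c l - c (l + 1)) := by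
    simp only [sg, zsmul_eq_mul]
    push_cast
    ring
  have := ((hasSum_int_sub_succ hs htop hbot).mul_left (sgnStar r / 2 : ℂ)).add
    ((hasSum_int_sgnStar_smul_sub_succ hs htop hbot).mul_left (1 / 2 : ℂ))
  have hvalue : (sgnStar r / 2 : ℂ) * 0 + 1 / 2 * 2 • c 0 = c 0 := by
    rw [two_smul]
    ring
  rwa [hvalue, ← funext hsplit] at this

theorem tendsto_add_mul_atTop {N : ℤ} (hN : 0 < N) (r : ℤ) :
    Tendsto (fun l : ℤ => r + l * N) atTop atTop :=
  tendsto_atTop_add_const_left _ r (tendsto_id.atTop_mul_const' hN)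

theorem tendsto_add_mul_atBot {N : ℤ} (hN : 0 < N) (r : ℤ) :
    Tendsto (fun l : ℤ => r + l * N) atBot atBot :=
  tendsto_atBot_add_const_left _ r (tendsto_id.atBot_mul_const' hN)

theorem stmt7 (N : ℕ) (hN : 1 ≤ N) (a b : ℤ → ℂ)
    (hrec : ∀ r : ℤ, a r = a (r + N) + b r)
    (hlimtop : Tendsto (fun r : ℤ => a r) atTop (𝓝 0))
    (hlimbot : Tendsto (fun r : ℤ => a r) atBot (𝓝 0))
    (hsum : ∀ r : ℤ, Summable (fun l : ℤ => ‖b (r + l * N)‖)) :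
    ∀ r : ℤ,
      (∑' l : ℤ, b (r + l * N)) = 0 ∧
      a r = ∑' l : ℤ, sg r l * b (r + l * N) := by
  intro r
  set c : ℤ → ℂ := fun l => a (r + l * N)
  have hb (l : ℤ) : b (r + l * N) = c l - c (l + 1) := by
    simp only [c, hrec (r + l * N), add_mul, one_mul, add_assoc, add_sub_cancel_left]
  have hs : Summable fun l => c l - c (l + 1) := by simpa only [hb] using (hsum r).of_norm
  have hN' : (0 : ℤ) < N := by omega
  have htop := hlimtop.comp (tendsto_add_mul_atTop hN' r)
  have hbot := hlimbot.comp (tendsto_add_mul_atBot hN' r)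
  simp only [hb]
  refine ⟨(hasSum_int_sub_succ hs htop hbot).tsum_eq, ?_⟩
  simpa [c] using (hasSum_sg_mul_sub_succ hs htop hbot r).tsum_eq.symm
end

section
/- (Jacobi triple product) For complex numbers q, x with 0 < |q| < 1 and x ≠ 0, one has (x;q)_∞ · (q/x;q)_∞ · (q;q)_∞ = ∑_{n∈ℤ} (-1)^n q^{n(n-1)/2} x^n, where (a;q)_∞ := ∏_{i≥0} (1 - q^i a). -/
/-- The infinite `q`-Pochhammer symbol `(a;q)_∞ = ∏_{i≥0} (1 - q^i a)`. -/
noncomputable def pochInf (a q : ℂ) : ℂ := ∏' i : ℕ, (1 - q ^ i * a)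

/-!
Substituting `y = -x q^{-N}` into the `q`-binomial theorem for `∏_{j<2N} (1 + q^j y)` and pulling
out the first `N` factors gives the finite identity
`(x;q)_N (q/x;q)_N = ∑_{|n| ≤ N} [2N, N+n]_q (-1)^n q^{n(n-1)/2} x^n`.
As `N → ∞` each Gaussian coefficient tends to `1/(q;q)_∞`, and all of them are bounded uniformly,
since finite products `∏ (1 - q^{i+1})` stay between two positive constants. Tannery's theorem
then lets the limit pass through the (absolutely convergent) bilateral sum.
-/

open Finset Filter Topology

section QBinomial

variable {R : Type*} [CommRing R] (q : R)

def qFactorial (m : ℕ) : R := ∏ i ∈ range m, (1 - q ^ (i + 1))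

def qBinomial : ℕ → ℕ → R
  | _, 0 => 1
  | 0, _ + 1 => 0
  | m + 1, k + 1 => qBinomial m k + q ^ (k + 1) * qBinomial m (k + 1)

variable {q}

@[simp] lemma qFactorial_zero : qFactorial q 0 = 1 := prod_range_zero _

lemma qFactorial_succ (m : ℕ) : qFactorial q (m + 1) = qFactorial q m * (1 - q ^ (m + 1)) :=
  prod_range_succ _ m

@[simp] lemma qBinomial_zero_right (m : ℕ) : qBinomial q m 0 = 1 := by cases m <;> rfl

lemma qBinomial_succ_succ (m k : ℕ) :
    qBinomial q (m + 1) (k + 1) = qBinomial q m k + q ^ (k + 1) * qBinomial q m (k + 1) := rfl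

lemma qBinomial_eq_zero_of_lt {m k : ℕ} (h : m < k) : qBinomial q m k = 0 := by
  induction m generalizing k with
  | zero => obtain ⟨k, rfl⟩ := Nat.exists_eq_succ_of_ne_zero h.ne'; rfl
  | succ m ih =>
    obtain ⟨k, rfl⟩ := Nat.exists_eq_succ_of_ne_zero (Nat.ne_zero_of_lt h)
    rw [qBinomial_succ_succ, ih (by omega), ih (by omega), mul_zero, add_zero]

lemma qBinomial_mul_qFactorial_mul_qFactorial {m k : ℕ} (hk : k ≤ m) :
    qBinomial q m k * qFactorial q k * qFactorial q (m - k) = qFactorial q m := by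
  induction m generalizing k with
  | zero => obtain rfl := Nat.le_zero.mp hk; simp
  | succ m ih =>
    rcases k with _ | k
    · simp
    rw [qBinomial_succ_succ, Nat.add_sub_add_right, qFactorial_succ, qFactorial_succ]
    rcases (Nat.le_of_lt_succ hk).eq_or_lt with rfl | hlt
    · rw [qBinomial_eq_zero_of_lt (Nat.lt_succ_self k)]
      linear_combination (1 - q ^ (k + 1)) * ih le_rfl
    · obtain ⟨d, rfl⟩ := Nat.exists_eq_add_of_lt hlt
      have hd : k + d + 1 - k = d + 1 := by omega
      have hd' : k + d + 1 - (k + 1) = d := by omega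
      have h1 := ih (k := k) (by omega)
      have h2 := ih (k := k + 1) (by omega)
      rw [hd, qFactorial_succ d] at h1
      rw [hd', qFactorial_succ k] at h2
      rw [hd, qFactorial_succ d]
      linear_combination (1 - q ^ (k + 1)) * h1 + q ^ (k + 1) * (1 - q ^ (d + 1)) * h2

theorem prod_one_add_pow_mul_eq_sum_qBinomial (y : R) (m : ℕ) :
    ∏ j ∈ range m, (1 + q ^ j * y)
      = ∑ k ∈ range (m + 1), q ^ k.choose 2 * qBinomial q m k * y ^ k := by
  induction m generalizing y with
  | zero => simp
  | succ m ih =>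
    have hshift : ∏ j ∈ range m, (1 + q ^ (j + 1) * y)
        = ∑ k ∈ range (m + 1), q ^ (k + 1).choose 2 * qBinomial q m k * y ^ k := by
      rw [prod_congr rfl fun j _ => by rw [pow_succ, mul_assoc], ih]
      refine sum_congr rfl fun k _ => ?_
      rw [Nat.choose_succ_succ', Nat.choose_one_right, pow_add]
      ring
    have hpeel : ∑ k ∈ range (m + 1), q ^ (k + 1).choose 2 * qBinomial q m k * y ^ k
        = ∑ k ∈ range (m + 1), q ^ (k + 1).choose 2 * (q ^ (k + 1) * qBinomial q m (k + 1))
          * y ^ (k + 1) + 1 := by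
      calc _ = ∑ k ∈ range (m + 1 + 1), q ^ (k + 1).choose 2 * qBinomial q m k * y ^ k := by
            rw [sum_range_succ _ (m + 1), qBinomial_eq_zero_of_lt (lt_add_one m)]; simp
        _ = _ := by
          rw [sum_range_succ']
          refine congrArg₂ _ (sum_congr rfl fun k _ => ?_) (by simp)
          rw [Nat.choose_succ_succ' (k + 1), Nat.choose_one_right, pow_add]
          ring
    have hfirst : ∑ k ∈ range (m + 1), q ^ (k + 1).choose 2 * qBinomial q m k * y ^ (k + 1)
        = (∑ k ∈ range (m + 1), q ^ (k + 1).choose 2 * qBinomial q m k * y ^ k) * y := by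
      rw [sum_mul]; exact sum_congr rfl fun k _ => by ring
    rw [prod_range_succ', hshift, sum_range_succ' _ (m + 1)]
    simp only [qBinomial_succ_succ, qBinomial_zero_right, mul_add, add_mul, sum_add_distrib]
    rw [hfirst, show Nat.choose 0 2 = 0 from rfl]
    linear_combination hpeel

end QBinomial

section FiniteJacobi

variable {K : Type*} [Field K] {q x : K}

lemma prod_range_pow_succ (q : K) (N : ℕ) : ∏ j ∈ range N, q ^ (j + 1) = q ^ (N + 1).choose 2 := by
  rw [prod_pow_eq_pow_sum, Nat.choose_two_right, ← sum_range_id, sum_range_succ']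
  rfl

lemma prod_range_two_mul_one_add_pow_mul (hq : q ≠ 0) (hx : x ≠ 0) (N : ℕ) :
    ∏ j ∈ range (2 * N), (1 + q ^ j * (-x / q ^ N))
      = (-x) ^ N / q ^ (N + 1).choose 2
        * ((∏ j ∈ range N, (1 - q ^ j * x)) * ∏ j ∈ range N, (1 - q ^ j * (q / x))) := by
  have hback : ∀ j ∈ range N, 1 + q ^ (N + j) * (-x / q ^ N) = 1 - q ^ j * x := fun j _ => by
    rw [pow_add]; field_simp; ring
  have hfront : ∀ j ∈ range N, 1 + q ^ (N - 1 - j) * (-x / q ^ N)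
      = -x / q ^ (j + 1) * (1 - q ^ j * (q / x)) := fun j hj => by
    have hpow : q ^ (N - 1 - j) * q ^ (j + 1) = q ^ N := by
      rw [← pow_add]; congr 1; have := mem_range.mp hj; omega
    rw [← hpow]; field_simp; ring
  rw [two_mul, prod_range_add, prod_congr rfl hback,
    ← prod_range_reflect (fun j => 1 + q ^ j * (-x / q ^ N)), prod_congr rfl hfront,
    prod_mul_distrib, prod_div_distrib, prod_const, card_range, prod_range_pow_succ]
  ring

lemma natCast_choose_two (m : ℕ) : ((m.choose 2 : ℕ) : ℤ) = m * (m - 1) / 2 := by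
  rw [Nat.choose_two_right, Int.natCast_div]
  rcases m with _ | m
  · rfl
  · push_cast; simp

lemma pow_choose_two_mul_div_pow (hq : q ≠ 0) (hx : x ≠ 0) (N k : ℕ) :
    q ^ k.choose 2 * (-x / q ^ N) ^ k = (-x) ^ N / q ^ (N + 1).choose 2
      * ((-1) ^ ((k : ℤ) - N) * q ^ (((k : ℤ) - N) * ((k : ℤ) - N - 1) / 2) * x ^ ((k : ℤ) - N)) := by
  set n : ℤ := (k : ℤ) - N with hn
  have hexp : ((k.choose 2 : ℕ) : ℤ) - N * k = n * (n - 1) / 2 - ((N + 1).choose 2 : ℕ) := by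
    rw [natCast_choose_two, natCast_choose_two]
    have := (Int.even_mul_pred_self n).two_dvd
    have := (Int.even_mul_pred_self (N + 1)).two_dvd
    have hring : (k : ℤ) * (k - 1) - 2 * (N * k) = n * (n - 1) - (N + 1) * (N + 1 - 1) := by
      rw [hn]; ring
    push_cast
    omega
  have hk : (k : ℤ) = N + n := by omega
  calc q ^ k.choose 2 * (-x / q ^ N) ^ k
      = (-x) ^ (k : ℤ) * (q ^ ((k.choose 2 : ℕ) : ℤ) / q ^ ((N * k : ℕ) : ℤ)) := by
        rw [zpow_natCast, zpow_natCast, zpow_natCast, div_pow, ← pow_mul]; ring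
    _ = (-x) ^ ((N : ℤ) + n) * (q ^ (n * (n - 1) / 2) / q ^ (((N + 1).choose 2 : ℕ) : ℤ)) := by
        rw [← zpow_sub₀ hq, ← zpow_sub₀ hq, Nat.cast_mul, hexp, hk]
    _ = _ := by
        rw [zpow_add₀ (neg_ne_zero.mpr hx), zpow_natCast, zpow_natCast, neg_eq_neg_one_mul x,
          mul_zpow]
        ring

theorem prod_mul_prod_eq_sum_qBinomial (hq : q ≠ 0) (hx : x ≠ 0) (N : ℕ) :
    (∏ j ∈ range N, (1 - q ^ j * x)) * ∏ j ∈ range N, (1 - q ^ j * (q / x))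
      = ∑ n ∈ Icc (-(N : ℤ)) N,
          qBinomial q (2 * N) (N + n).toNat * ((-1) ^ n * q ^ (n * (n - 1) / 2) * x ^ n) := by
  have hC : (-x) ^ N / q ^ (N + 1).choose 2 ≠ 0 :=
    div_ne_zero (pow_ne_zero _ (neg_ne_zero.mpr hx)) (pow_ne_zero _ hq)
  have h := prod_one_add_pow_mul_eq_sum_qBinomial (q := q) (-x / q ^ N) (2 * N)
  rw [prod_range_two_mul_one_add_pow_mul hq hx] at h
  refine mul_left_cancel₀ hC (h.trans ?_)
  rw [mul_sum]
  refine sum_nbij' (fun k => (k : ℤ) - N) (fun n => (N + n).toNat) ?_ ?_ ?_ ?_ ?_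
  · intro k hk; simp only [mem_range, mem_Icc] at hk ⊢; omega
  · intro n hn; simp only [mem_range, mem_Icc] at hn ⊢; omega
  · intro k _; omega
  · intro n hn; simp only [mem_Icc] at hn; omega
  · intro k _
    rw [show ((N : ℤ) + (k - N)).toNat = k by omega, mul_right_comm,
      pow_choose_two_mul_div_pow hq hx]
    ring

end FiniteJacobi

section NormBounds

open Real

variable {ι 𝕜 : Type*} [NormedField 𝕜]

lemma exp_neg_div_one_sub_le_one_sub {t r : ℝ} (ht : 0 ≤ t) (htr : t ≤ r) (hr : r < 1) :
    exp (-(t / (1 - r))) ≤ 1 - t := by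
  set u := t / (1 - r)
  have hu : 0 ≤ u := div_nonneg ht (by linarith)
  have htu : t ≤ (1 - t) * u := by
    calc t = (1 - r) * u := (mul_div_cancel₀ t (sub_ne_zero.mpr hr.ne')).symm
      _ ≤ (1 - t) * u := by gcongr
  rw [exp_neg, inv_le_iff_one_le_mul₀ (exp_pos u)]
  nlinarith [add_one_le_exp u]

lemma norm_prod_one_sub_le_exp (s : Finset ι) (z : ι → 𝕜) :
    ‖∏ i ∈ s, (1 - z i)‖ ≤ exp (∑ i ∈ s, ‖z i‖) := by
  rw [norm_prod]
  refine (prod_le_prod (fun _ _ => norm_nonneg _) fun i _ => ?_).trans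
    (prod_one_add_le_exp_sum s fun i => norm_nonneg (z i))
  simpa [add_comm] using norm_sub_le (1 : 𝕜) (z i)

lemma exp_neg_le_norm_prod_one_sub {s : Finset ι} {z : ι → 𝕜} {r : ℝ} (hr : r < 1)
    (hz : ∀ i ∈ s, ‖z i‖ ≤ r) :
    exp (-((∑ i ∈ s, ‖z i‖) / (1 - r))) ≤ ‖∏ i ∈ s, (1 - z i)‖ := by
  rw [norm_prod, sum_div, ← sum_neg_distrib, exp_sum]
  refine prod_le_prod (fun _ _ => (exp_pos _).le) fun i hi => ?_
  calc exp (-(‖z i‖ / (1 - r))) ≤ 1 - ‖z i‖ :=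
        exp_neg_div_one_sub_le_one_sub (norm_nonneg _) (hz i hi) hr
    _ ≤ ‖1 - z i‖ := by simpa using norm_sub_norm_le (1 : 𝕜) (z i)

variable {q : 𝕜}

lemma sum_range_norm_pow_succ_le (hq : ‖q‖ < 1) (m : ℕ) :
    ∑ i ∈ range m, ‖q ^ (i + 1)‖ ≤ ‖q‖ / (1 - ‖q‖) := by
  simp only [norm_pow]
  rw [range_eq_Ico, sum_Ico_add' (fun i => ‖q‖ ^ i)]
  simpa using geom_sum_Ico_le_of_lt_one (m := 0 + 1) (n := m + 1) (norm_nonneg q) hq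

lemma norm_qFactorial_le (hq : ‖q‖ < 1) (m : ℕ) :
    ‖qFactorial q m‖ ≤ exp (‖q‖ / (1 - ‖q‖)) :=
  (norm_prod_one_sub_le_exp _ _).trans (exp_le_exp.mpr (sum_range_norm_pow_succ_le hq m))

lemma exp_neg_le_norm_qFactorial (hq : ‖q‖ < 1) (m : ℕ) :
    exp (-(‖q‖ / (1 - ‖q‖) / (1 - ‖q‖))) ≤ ‖qFactorial q m‖ := by
  refine le_trans ?_ (exp_neg_le_norm_prod_one_sub hq fun i _ => ?_)
  · have := sum_range_norm_pow_succ_le hq m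
    have : 0 < 1 - ‖q‖ := sub_pos.mpr hq
    gcongr
  · rw [norm_pow]
    exact pow_le_of_le_one (norm_nonneg q) hq.le (Nat.succ_ne_zero i)

lemma qFactorial_ne_zero (hq : ‖q‖ < 1) (m : ℕ) : qFactorial q m ≠ 0 :=
  norm_pos_iff.mp ((exp_pos _).trans_le (exp_neg_le_norm_qFactorial hq m))

lemma qBinomial_eq_div (hq : ‖q‖ < 1) {m k : ℕ} (hk : k ≤ m) :
    qBinomial q m k = qFactorial q m / (qFactorial q k * qFactorial q (m - k)) := by
  rw [eq_div_iff (mul_ne_zero (qFactorial_ne_zero hq k) (qFactorial_ne_zero hq (m - k))),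
    ← mul_assoc, qBinomial_mul_qFactorial_mul_qFactorial hk]

lemma exists_norm_qBinomial_le (hq : ‖q‖ < 1) : ∃ B, ∀ m k, ‖qBinomial q m k‖ ≤ B := by
  set U := exp (‖q‖ / (1 - ‖q‖))
  set L := exp (-(‖q‖ / (1 - ‖q‖) / (1 - ‖q‖)))
  refine ⟨U / (L * L), fun m k => ?_⟩
  rcases le_or_gt k m with hk | hk
  · rw [qBinomial_eq_div hq hk, norm_div, norm_mul]
    gcongr
    · exact norm_qFactorial_le hq m
    · exact exp_neg_le_norm_qFactorial hq k
    · exact exp_neg_le_norm_qFactorial hq (m - k)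
  · rw [qBinomial_eq_zero_of_lt hk, norm_zero]
    positivity

end NormBounds

section Pochhammer

variable {q : ℂ}

lemma multipliable_one_sub_pow_mul (hq : ‖q‖ < 1) (a : ℂ) :
    Multipliable fun i : ℕ => 1 - q ^ i * a := by
  have hsum : Summable fun i : ℕ => ‖-(q ^ i * a)‖ := by
    simpa [norm_mul, norm_pow] using
      (summable_geometric_of_lt_one (norm_nonneg q) hq).mul_right ‖a‖
  simpa [sub_eq_add_neg] using multipliable_one_add_of_summable hsum

lemma tendsto_prod_range_pochInf (hq : ‖q‖ < 1) (a : ℂ) :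
    Tendsto (fun N => ∏ i ∈ range N, (1 - q ^ i * a)) atTop (𝓝 (pochInf a q)) :=
  (multipliable_one_sub_pow_mul hq a).hasProd.tendsto_prod_nat

lemma tendsto_qFactorial_pochInf (hq : ‖q‖ < 1) :
    Tendsto (qFactorial q) atTop (𝓝 (pochInf q q)) := by
  refine (tendsto_prod_range_pochInf hq q).congr fun m => prod_congr rfl fun i _ => ?_
  rw [pow_succ]

lemma pochInf_self_ne_zero (hq : ‖q‖ < 1) : pochInf q q ≠ 0 := by
  refine norm_pos_iff.mp ((Real.exp_pos (-(‖q‖ / (1 - ‖q‖) / (1 - ‖q‖)))).trans_le ?_)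
  exact ge_of_tendsto' (tendsto_qFactorial_pochInf hq).norm (exp_neg_le_norm_qFactorial hq)

lemma tendsto_qBinomial_two_mul (hq : ‖q‖ < 1) (n : ℤ) :
    Tendsto (fun N : ℕ => qBinomial q (2 * N) (N + n).toNat) atTop (𝓝 (pochInf q q)⁻¹) := by
  have hP := tendsto_qFactorial_pochInf hq
  have hm : Tendsto (fun N : ℕ => 2 * N) atTop atTop :=
    tendsto_atTop_atTop.mpr fun b => ⟨b, fun N _ => by omega⟩
  have hk : Tendsto (fun N : ℕ => ((N : ℤ) + n).toNat) atTop atTop :=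
    tendsto_atTop_atTop.mpr fun b => ⟨b + n.natAbs, fun N _ => by omega⟩
  have hmk : Tendsto (fun N : ℕ => 2 * N - ((N : ℤ) + n).toNat) atTop atTop :=
    tendsto_atTop_atTop.mpr fun b => ⟨b + n.natAbs, fun N _ => by omega⟩
  have hlim := (hP.comp hm).div ((hP.comp hk).mul (hP.comp hmk))
    (mul_ne_zero (pochInf_self_ne_zero hq) (pochInf_self_ne_zero hq))
  rw [div_mul_cancel_left₀ (pochInf_self_ne_zero hq)] at hlim
  refine hlim.congr' ?_
  filter_upwards [eventually_ge_atTop n.natAbs] with N hN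
  have hkm : ((N : ℤ) + n).toNat ≤ 2 * N := by omega
  simp only [Pi.div_apply, Function.comp_apply, qBinomial_eq_div hq hkm]

end Pochhammer

section Summability

lemma summable_pow_choose_two_mul_pow {r s : ℝ} (hr0 : 0 ≤ r) (hr : r < 1) (hs : 0 ≤ s) :
    Summable fun m : ℕ => r ^ m.choose 2 * s ^ m := by
  refine summable_of_ratio_norm_eventually_le (r := 1 / 2) (by norm_num) ?_
  have hlim : Tendsto (fun m : ℕ => r ^ m * s) atTop (𝓝 0) := by
    simpa using (tendsto_pow_atTop_nhds_zero_of_lt_one hr0 hr).mul_const s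
  filter_upwards [hlim.eventually_le_const (by norm_num : (0 : ℝ) < 1 / 2)] with m hm
  have hstep : r ^ (m + 1).choose 2 * s ^ (m + 1) = (r ^ m * s) * (r ^ m.choose 2 * s ^ m) := by
    rw [Nat.choose_succ_succ', Nat.choose_one_right, pow_add, pow_succ]; ring
  rw [Real.norm_of_nonneg (by positivity), Real.norm_of_nonneg (by positivity), hstep]
  exact mul_le_mul_of_nonneg_right hm (by positivity)

lemma summable_zpow_mul_pred_div_two_mul_zpow {r s : ℝ} (hr0 : 0 ≤ r) (hr : r < 1) (hs : 0 < s) :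
    Summable fun n : ℤ => r ^ (n * (n - 1) / 2) * s ^ n := by
  refine .of_nat_of_neg ?_ ?_
  · simpa only [← natCast_choose_two, zpow_natCast] using
      summable_pow_choose_two_mul_pow hr0 hr hs.le
  -- the negative half is the positive half with `s` replaced by `r / s`
  · refine (summable_pow_choose_two_mul_pow hr0 hr (by positivity : 0 ≤ r / s)).congr fun m => ?_
    have hexp : -(m : ℤ) * (-m - 1) / 2 = ((m.choose 2 + m : ℕ) : ℤ) := by
      have := (Int.even_mul_pred_self m).two_dvd
      have hring : -(m : ℤ) * (-m - 1) = m * (m - 1) + 2 * m := by ring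
      push_cast
      rw [natCast_choose_two]
      omega
    rw [hexp, zpow_natCast, zpow_neg, zpow_natCast, pow_add, div_pow]
    field_simp

end Summability

theorem stmt9 (q x : ℂ) (hq0 : 0 < ‖q‖) (hq1 : ‖q‖ < 1)
    (hx : x ≠ 0) :
    pochInf x q * pochInf (q / x) q * pochInf q q
      = ∑' n : ℤ, (-1 : ℂ) ^ n * q ^ (n * (n - 1) / 2) * x ^ n := by
  set t : ℤ → ℂ := fun n => (-1 : ℂ) ^ n * q ^ (n * (n - 1) / 2) * x ^ n
  set F : ℕ → ℤ → ℂ := fun N => (Icc (-(N : ℤ)) N : Set ℤ).indicator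
    fun n => qBinomial q (2 * N) (N + n).toNat * t n
  obtain ⟨B, hB⟩ := exists_norm_qBinomial_le hq1
  have hsummable : Summable fun n => B * ‖t n‖ := by
    refine ((summable_zpow_mul_pred_div_two_mul_zpow (norm_nonneg q) hq1
      (norm_pos_iff.mpr hx)).mul_left B).congr fun n => ?_
    simp [t, norm_zpow]
  have hpointwise : ∀ n, Tendsto (fun N => F N n) atTop (𝓝 ((pochInf q q)⁻¹ * t n)) := by
    intro n
    refine ((tendsto_qBinomial_two_mul hq1 n).mul_const (t n)).congr' ?_
    filter_upwards [eventually_ge_atTop n.natAbs] with N hN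
    have hn : n ∈ Icc (-(N : ℤ)) N := mem_Icc.mpr ⟨by omega, by omega⟩
    simp only [F, Set.indicator_of_mem (mem_coe.mpr hn)]
  have hbound : ∀ N n, ‖F N n‖ ≤ B * ‖t n‖ := fun N n =>
    (norm_indicator_le_norm_self _ _).trans (by rw [norm_mul]; gcongr; exact hB _ _)
  have hlim := (tendsto_tsum_of_dominated_convergence hsummable hpointwise
    (.of_forall hbound)).congr fun N => by
      rw [← sum_eq_tsum_indicator, ← prod_mul_prod_eq_sum_qBinomial (norm_pos_iff.mp hq0) hx]
  have hprod := (tendsto_prod_range_pochInf hq1 x).mul (tendsto_prod_range_pochInf hq1 (q / x))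
  rw [tendsto_nhds_unique hprod hlim, tsum_mul_left, mul_comm, ← mul_assoc,
    mul_inv_cancel₀ (pochInf_self_ne_zero hq1), one_mul]
end

section
/- Let t ≥ 1 be an integer, p, m integers, and w a complex number with 0 < |w| < 1. Fix an integer s. Then ∑_{r∈ℤ, r≢s (mod 2)} (-1)^{(r-s-1)/2} w^{r² + 2(4t-1)rs + s² + 4(p+m)r + 4(p-m)s} = 0, where the (absolutely convergent) sum is over all integers r of opposite parity to s. -/
theorem stmt11 (t : ℤ) (ht : 1 ≤ t) (p m : ℤ) (w : ℂ)
    (hw0 : 0 < ‖w‖) (hw1 : ‖w‖ < 1) (s : ℤ) :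
    ∑' r : {r : ℤ // r % 2 ≠ s % 2},
        (-1 : ℂ) ^ (((r : ℤ) - s - 1) / 2) *
          w ^ ((r : ℤ)^2 + 2*(4*t-1)*(r : ℤ)*s + s^2 + 4*(p+m)*(r : ℤ) + 4*(p-m)*s)
      = 0 := by
  set u : ℤ := (4*t-1)*s with hu
  obtain ⟨v, hv⟩ : ∃ v, u = 2*v + s := ⟨2*t*s - s, by rw [hu]; ring⟩
  set c : ℤ := -2*u - 4*(p+m) with hc
  set f : {r : ℤ // r % 2 ≠ s % 2} → ℂ := fun r =>
    (-1 : ℂ) ^ (((r : ℤ) - s - 1) / 2) *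
      w ^ ((r : ℤ)^2 + 2*(4*t-1)*(r : ℤ)*s + s^2 + 4*(p+m)*(r : ℤ) + 4*(p-m)*s) with hf
  have hmem : ∀ r : ℤ, r % 2 ≠ s % 2 → (c - r) % 2 ≠ s % 2 := by
    intro r hr; omega
  let e : {r : ℤ // r % 2 ≠ s % 2} ≃ {r : ℤ // r % 2 ≠ s % 2} :=
    { toFun := fun r => ⟨c - r, hmem r r.2⟩
      invFun := fun r => ⟨c - r, hmem r r.2⟩
      left_inv := fun r => by simp
      right_inv := fun r => by simp }
  have hw : w ≠ 0 := by
    intro h; rw [h] at hw0; simp at hw0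
  have key : ∀ r : {r : ℤ // r % 2 ≠ s % 2}, f (e r) = - f r := by
    rintro ⟨r, hr⟩
    simp only [hf, e, Equiv.coe_fn_mk]
    have hexp : (c - r)^2 + 2*(4*t-1)*(c-r)*s + s^2 + 4*(p+m)*(c-r) + 4*(p-m)*s
        = r^2 + 2*(4*t-1)*r*s + s^2 + 4*(p+m)*r + 4*(p-m)*s := by
      rw [hc, hu]; ring
    have h2 : r - s - 1 = 2 * ((r - s - 1)/2) := by omega
    set k : ℤ := (r - s - 1)/2 with hk
    have hd : (c - r - s - 1)/2 = 2*(-v - (p+m) - r + k) + 1 + k := by omega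
    rw [hexp, hd]
    have hne : (-1 : ℂ) ≠ 0 := by norm_num
    have hsgn : ((-1:ℂ))^(2*(-v - (p+m) - r + k)+1+k) = -(-1:ℂ)^k := by
      rw [zpow_add₀ hne, zpow_add₀ hne, zpow_mul]; norm_num
    rw [hsgn]; ring
  have h1 : ∑' r, f r = - ∑' r, f r := by
    conv_lhs => rw [← e.tsum_eq f]
    calc ∑' r, f (e r) = ∑' r, - f r := by simp only [key]
      _ = - ∑' r, f r := tsum_neg
  have h2 : (2 : ℂ) * ∑' r, f r = 0 := by linear_combination h1
  have := mul_eq_zero.mp h2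
  simpa using this
end

section
/- Let N ≥ 1 be an integer and ζ = e^{2πi/N}. Then ∑_{n=0}^{N-1} ∏_{i=1}^{n} (1 - ζ^{-i}) = ∑_{n=0}^{N-1} ζ^{n+1} · ∏_{i=1}^{n} (1 - ζ^{i})². That is, F(ζ^{-1}) = U(-1;ζ), where F(q) = ∑_{n≥0} (q;q)_n and U(x;q) = ∑_{n≥0} (-xq;q)_n(-q/x;q)_n q^{n+1}, both evaluated at the root of unity (all terms with n ≥ N vanish since (ζ;ζ)_n = 0 for n ≥ N). -/
open Complex Finset

namespace Stmt17Aux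

noncomputable def aa (ζ : ℂ) (n : ℕ) : ℂ := ∏ i ∈ Icc 1 n, (1 - ζ ^ i)

noncomputable def gb (ζ : ℂ) (n k : ℕ) : ℂ :=
  if k ≤ n then aa ζ n / (aa ζ k * aa ζ (n - k)) else 0

variable {ζ : ℂ} {N : ℕ}

lemma aa_zero : aa ζ 0 = 1 := by simp [aa]

lemma aa_succ (n : ℕ) : aa ζ (n + 1) = aa ζ n * (1 - ζ ^ (n + 1)) := by
  rw [aa, aa, Finset.prod_Icc_succ_top (by omega)]

lemma aa_ne_zero (hprim : ∀ i, 0 < i → i < N → ζ ^ i ≠ 1) {n : ℕ} (hn : n < N) :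
    aa ζ n ≠ 0 := by
  rw [aa]
  apply Finset.prod_ne_zero_iff.2
  intro i hi
  simp only [Finset.mem_Icc] at hi
  have := hprim i (by omega) (by omega)
  intro h
  apply this
  have := sub_eq_zero.mp h
  exact this.symm

lemma aa_N_zero (hN : 1 ≤ N) (hζ : ζ ^ N = 1) : aa ζ N = 0 := by
  rw [aa]
  apply Finset.prod_eq_zero (i := N) (by simp [Finset.mem_Icc]; omega)
  rw [hζ]; ring

lemma aa_split (k m : ℕ) :
    aa ζ (k + m) = aa ζ k * ∏ i ∈ Finset.range m, (1 - ζ ^ (k + 1) * ζ ^ i) := by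
  induction m with
  | zero => simp
  | succ m ih =>
    rw [show k + (m+1) = (k+m)+1 by ring, aa_succ, ih, Finset.prod_range_succ,
      ← mul_assoc]
    congr 2
    rw [← pow_add]
    congr 1
    omega

lemma aa_range (n : ℕ) : aa ζ n = ∏ i ∈ Finset.range n, (1 - ζ * ζ ^ i) := by
  have := aa_split (ζ := ζ) 0 n
  simpa [aa_zero, pow_one] using this

lemma gb_of_le {n k : ℕ} (h : k ≤ n) : gb ζ n k = aa ζ n / (aa ζ k * aa ζ (n - k)) := by
  rw [gb, if_pos h]

lemma gb_zero_right (hprim : ∀ i, 0 < i → i < N → ζ ^ i ≠ 1) {n : ℕ} (hn : n < N) :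
    gb ζ n 0 = 1 := by
  rw [gb_of_le (Nat.zero_le n)]
  simp [aa_zero, div_self (aa_ne_zero hprim hn)]

lemma gb_self (hprim : ∀ i, 0 < i → i < N → ζ ^ i ≠ 1) {n : ℕ} (hn : n < N) :
    gb ζ n n = 1 := by
  rw [gb_of_le le_rfl]
  simp [aa_zero, div_self (aa_ne_zero hprim hn)]

lemma gb_N_zero (hN : 1 ≤ N) (hζ : ζ ^ N = 1) (j : ℕ) : gb ζ N j = 0 := by
  rw [gb]
  split
  · rw [aa_N_zero hN hζ, zero_div]
  · rfl

lemma pascal₁ (hprim : ∀ i, 0 < i → i < N → ζ ^ i ≠ 1) (k m : ℕ) (h : k + m + 2 ≤ N) :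
    gb ζ (k + m + 2) (k + 1) = gb ζ (k + m + 1) k + ζ ^ (k + 1) * gb ζ (k + m + 1) (k + 1) := by
  rw [gb_of_le (by omega), gb_of_le (by omega), gb_of_le (by omega)]
  rw [show k + m + 2 - (k + 1) = m + 1 by omega, show k + m + 1 - k = m + 1 by omega,
    show k + m + 1 - (k + 1) = m by omega]
  rw [show k + m + 2 = (k + m + 1) + 1 by omega, aa_succ, aa_succ (ζ := ζ) k,
    aa_succ (ζ := ζ) m]
  have hk := aa_ne_zero (ζ := ζ) hprim (show k < N by omega)
  have hm := aa_ne_zero (ζ := ζ) hprim (show m < N by omega)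
  have hk1 : (1 : ℂ) - ζ ^ (k+1) ≠ 0 := by
    intro hc; exact hprim (k+1) (by omega) (by omega) (by linear_combination -hc)
  have hm1 : (1 : ℂ) - ζ ^ (m+1) ≠ 0 := by
    intro hc; exact hprim (m+1) (by omega) (by omega) (by linear_combination -hc)
  have hp : ζ ^ (k + m + 1 + 1) = ζ ^ (k+1) * ζ ^ (m+1) := by
    rw [← pow_add]; congr 1; omega
  field_simp
  rw [hp]; ring

lemma pascal₂ (hprim : ∀ i, 0 < i → i < N → ζ ^ i ≠ 1) (k m : ℕ) (h : k + m + 2 ≤ N) :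
    gb ζ (k + m + 2) (k + 1) = gb ζ (k + m + 1) (k + 1) + ζ ^ (m + 1) * gb ζ (k + m + 1) k := by
  rw [gb_of_le (by omega), gb_of_le (by omega), gb_of_le (by omega)]
  rw [show k + m + 2 - (k + 1) = m + 1 by omega, show k + m + 1 - k = m + 1 by omega,
    show k + m + 1 - (k + 1) = m by omega]
  rw [show k + m + 2 = (k + m + 1) + 1 by omega, aa_succ, aa_succ (ζ := ζ) k,
    aa_succ (ζ := ζ) m]
  have hk := aa_ne_zero (ζ := ζ) hprim (show k < N by omega)
  have hm := aa_ne_zero (ζ := ζ) hprim (show m < N by omega)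
  have hk1 : (1 : ℂ) - ζ ^ (k+1) ≠ 0 := by
    intro hc; exact hprim (k+1) (by omega) (by omega) (by linear_combination -hc)
  have hm1 : (1 : ℂ) - ζ ^ (m+1) ≠ 0 := by
    intro hc; exact hprim (m+1) (by omega) (by omega) (by linear_combination -hc)
  have hp : ζ ^ (k + m + 1 + 1) = ζ ^ (k+1) * ζ ^ (m+1) := by
    rw [← pow_add]; congr 1; omega
  field_simp
  rw [hp]; ring
lemma pascal₂' (hprim : ∀ i, 0 < i → i < N → ζ ^ i ≠ 1) {j m : ℕ} (hj : j ≤ m)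
    (hm : m + 1 < N) :
    gb ζ (m + 1) (j + 1) = gb ζ m (j + 1) + ζ ^ (m - j) * gb ζ m j := by
  rcases Nat.lt_or_ge j m with hlt | hge
  · have := pascal₂ (ζ := ζ) hprim j (m - j - 1) (by omega)
    rw [show j + (m - j - 1) + 2 = m + 1 by omega, show j + (m - j - 1) + 1 = m by omega,
      show m - j - 1 + 1 = m - j by omega] at this
    exact this
  · have hjm : j = m := le_antisymm hj hge
    rw [hjm, gb_self hprim hm, gb_self hprim (show m < N by omega),
      show gb ζ m (m + 1) = 0 from by rw [gb, if_neg (by omega)],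
      Nat.sub_self, pow_zero]
    ring

lemma qbinom (hprim : ∀ i, 0 < i → i < N → ζ ^ i ≠ 1) (m : ℕ) (hm : m < N) (x : ℂ) :
    ∏ i ∈ Finset.range m, (1 - x * ζ ^ i)
      = ∑ j ∈ Finset.range (m + 1), gb ζ m j * ∏ t ∈ Finset.range j, (-(x * ζ ^ t)) := by
  induction m with
  | zero => simp [gb_zero_right hprim hm]
  | succ m ih =>
    have hmN : m < N := by omega
    rw [Finset.prod_range_succ, ih hmN]
    rw [Finset.sum_range_succ' (fun j => gb ζ (m+1) j * ∏ t ∈ Finset.range j, (-(x * ζ ^ t)))]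
    have hsplit : ∀ j ∈ Finset.range (m+1),
        gb ζ (m+1) (j+1) * ∏ t ∈ Finset.range (j+1), (-(x * ζ ^ t))
          = gb ζ m (j+1) * ∏ t ∈ Finset.range (j+1), (-(x * ζ ^ t))
            + gb ζ m j * (∏ t ∈ Finset.range j, (-(x * ζ ^ t))) * (-(x * ζ ^ m)) := by
      intro j hj
      have hjm : j ≤ m := by simpa [Nat.lt_succ_iff] using Finset.mem_range.mp hj
      rw [pascal₂' hprim hjm hm, Finset.prod_range_succ]
      have hz : ζ ^ (m - j) * ζ ^ j = ζ ^ m := by rw [← pow_add]; congr 1; omega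
      linear_combination (-(x * gb ζ m j * (∏ t ∈ Finset.range j, (-(x * ζ ^ t))))) * hz
    rw [Finset.sum_congr rfl hsplit, Finset.sum_add_distrib]
    have e1 := Finset.sum_range_succ' (fun j => gb ζ m j * ∏ t ∈ Finset.range j, (-(x * ζ ^ t))) (m+1)
    have e2 := Finset.sum_range_succ (fun j => gb ζ m j * ∏ t ∈ Finset.range j, (-(x * ζ ^ t))) (m+1)
    have hgb0 : gb ζ m (m+1) = 0 := by rw [gb, if_neg (by omega)]
    rw [hgb0, zero_mul, add_zero] at e2
    rw [e2, gb_zero_right hprim hmN] at e1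
    simp only [Finset.prod_range_zero, mul_one] at e1 ⊢
    rw [gb_zero_right hprim hm]
    have e3 : ∑ j ∈ Finset.range (m+1),
        gb ζ m j * (∏ t ∈ Finset.range j, (-(x * ζ ^ t))) * (-(x * ζ ^ m))
          = (∑ j ∈ Finset.range (m+1), gb ζ m j * ∏ t ∈ Finset.range j, (-(x * ζ ^ t))) * (-(x * ζ ^ m)) := by
      rw [Finset.sum_mul]
    rw [e3]
    linear_combination e1
lemma hockey (hprim : ∀ i, 0 < i → i < N → ζ ^ i ≠ 1) (m : ℕ) (hm : 1 ≤ m) :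
    ∀ s : ℕ, s + m + 1 ≤ N →
      ∑ i ∈ Finset.range (m + 1), ζ ^ i * gb ζ (s + i) i = gb ζ (s + m + 1) m := by
  induction m, hm using Nat.le_induction with
  | base =>
    intro s hs
    rw [Finset.sum_range_succ, Finset.sum_range_one]
    have hp := pascal₁ hprim 0 s (by omega)
    rw [show (0:ℕ) + s + 2 = s + 1 + 1 by omega, show (0:ℕ) + s + 1 = s + 1 by omega] at hp
    rw [hp, show s + 0 = s by omega]
    rw [gb_zero_right hprim (show s < N by omega), gb_zero_right hprim (show s + 1 < N by omega)]
    norm_num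
  | succ m hm ih =>
    intro s hs
    rw [Finset.sum_range_succ, ih s (by omega)]
    have := pascal₁ hprim m s (by omega)
    rw [show m + s + 2 = s + (m + 1) + 1 by omega, show m + s + 1 = s + m + 1 by omega] at this
    rw [this]
    ring

lemma hockey_vanish (hN : 1 ≤ N) (hζ : ζ ^ N = 1)
    (hprim : ∀ i, 0 < i → i < N → ζ ^ i ≠ 1) (s : ℕ) (hs : s + 2 ≤ N) :
    ∑ i ∈ Finset.range (N - s), ζ ^ i * gb ζ (s + i) i = 0 := by
  have h1 : N - s = (N - 1 - s) + 1 := by omega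
  rw [h1, hockey hprim (N - 1 - s) (by omega) s (by omega),
    show s + (N - 1 - s) + 1 = N by omega]
  exact gb_N_zero hN hζ _

lemma gbN1 (hN : 1 ≤ N) (hζ : ζ ^ N = 1) (hprim : ∀ i, 0 < i → i < N → ζ ^ i ≠ 1) :
    ∀ j : ℕ, j ≤ N - 1 → gb ζ (N - 1) j = ∏ t ∈ Finset.range j, (-(ζ ^ (N - 1 - t))) := by
  intro j
  induction j with
  | zero => intro _; simpa using gb_zero_right hprim (show N - 1 < N by omega)
  | succ j ih =>
    intro hj
    rw [Finset.prod_range_succ, ← ih (by omega)]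
    rw [gb_of_le (by omega), gb_of_le (by omega)]
    have h1 : N - 1 - (j + 1) + 1 = N - 1 - j := by omega
    have haj := aa_ne_zero (ζ := ζ) hprim (show j < N by omega)
    have haj1 := aa_ne_zero (ζ := ζ) hprim (show j + 1 < N by omega)
    have ham := aa_ne_zero (ζ := ζ) hprim (show N - 1 - (j+1) < N by omega)
    have ham1 := aa_ne_zero (ζ := ζ) hprim (show N - 1 - j < N by omega)
    have key : (1 : ℂ) - ζ ^ (N - 1 - j) = (-(ζ ^ (N - 1 - j))) * (1 - ζ ^ (j + 1)) := by
      have : ζ ^ (N - 1 - j) * ζ ^ (j + 1) = 1 := by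
        rw [← pow_add, show N - 1 - j + (j + 1) = N by omega, hζ]
      linear_combination -this
    rw [div_mul_eq_mul_div, div_eq_div_iff (mul_ne_zero haj1 ham) (mul_ne_zero haj ham1)]
    rw [show aa ζ (N - 1 - j) = aa ζ (N - 1 - (j+1)) * (1 - ζ ^ (N - 1 - j)) from by
        rw [← h1, aa_succ],
      show aa ζ (j + 1) = aa ζ j * (1 - ζ ^ (j+1)) from aa_succ j, key]
    ring
lemma tri (K : ℕ) (f : ℕ → ℕ → ℂ) :
    ∑ m ∈ Finset.range K, ∑ j ∈ Finset.range (m + 1), f m j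
      = ∑ j ∈ Finset.range K, ∑ i ∈ Finset.range (K - j), f (j + i) j := by
  induction K with
  | zero => simp
  | succ K ih =>
    rw [Finset.sum_range_succ, ih]
    have h1 : ∀ j ∈ Finset.range (K + 1),
        ∑ i ∈ Finset.range (K + 1 - j), f (j + i) j
          = ∑ i ∈ Finset.range (K - j), f (j + i) j + f K j := by
      intro j hj
      have hjK : j ≤ K := by simpa [Nat.lt_succ_iff] using Finset.mem_range.mp hj
      rw [show K + 1 - j = (K - j) + 1 by omega, Finset.sum_range_succ,
        show j + (K - j) = K by omega]
    rw [Finset.sum_congr rfl h1, Finset.sum_add_distrib, Finset.sum_range_succ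
      (fun j => ∑ i ∈ Finset.range (K - j), f (j + i) j)]
    simp

lemma expsum (M : ℕ) : ∀ k : ℕ, ∑ t ∈ Finset.range k, (t + 1) + k * M
    = ∑ t ∈ Finset.range k, (M + k - t) := by
  intro k
  induction k with
  | zero => simp
  | succ k ih =>
    rw [Finset.sum_range_succ, Finset.sum_range_succ]
    have h1 : ∑ t ∈ Finset.range k, (M + (k + 1) - t)
        = ∑ t ∈ Finset.range k, ((M + k - t) + 1) := by
      apply Finset.sum_congr rfl
      intro t ht
      have := Finset.mem_range.mp ht
      omega
    have h2 : ∑ t ∈ Finset.range k, (M + k - t + 1)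
        = (∑ t ∈ Finset.range k, (M + k - t)) + k := by
      rw [Finset.sum_add_distrib, Finset.sum_const, Finset.card_range, smul_eq_mul, mul_one]
    rw [h1, h2, Nat.succ_mul]
    generalize hP : k * M = P at *
    omega

lemma prod_neg_pow (ζ : ℂ) (k : ℕ) (f : ℕ → ℕ) :
    ∏ t ∈ Finset.range k, (-(ζ ^ (f t))) = (-1) ^ k * ζ ^ (∑ t ∈ Finset.range k, f t) := by
  calc ∏ t ∈ Finset.range k, (-(ζ ^ (f t)))
      = ∏ t ∈ Finset.range k, ((-1) * ζ ^ (f t)) := by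
        apply Finset.prod_congr rfl; intro t _; ring
    _ = (∏ _t ∈ Finset.range k, (-1 : ℂ)) * ∏ t ∈ Finset.range k, ζ ^ (f t) :=
        Finset.prod_mul_distrib
    _ = (-1) ^ k * ζ ^ (∑ t ∈ Finset.range k, f t) := by
        rw [Finset.prod_const, Finset.card_range, Finset.prod_pow_eq_pow_sum]

lemma Slem {ζ : ℂ} {N : ℕ} (hN : 1 ≤ N) (hζ : ζ ^ N = 1) (k : ℕ) (hk : k < N) :
    (∏ t ∈ Finset.range k, (-(ζ * ζ ^ t)))
      * ((∏ t ∈ Finset.range (N - 1 - k), (-(ζ ^ (k + 1) * ζ ^ t)))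
        * ∏ t ∈ Finset.range (N - 1 - k), (-(ζ ^ (N - 1 - t))))
      = ∏ i ∈ Finset.Icc 1 k, (-(ζ ^ (N - i))) := by
  have hpair : (∏ t ∈ Finset.range (N - 1 - k), (-(ζ ^ (k + 1) * ζ ^ t)))
      * ∏ t ∈ Finset.range (N - 1 - k), (-(ζ ^ (N - 1 - t)))
      = ζ ^ (k * (N - 1 - k)) := by
    rw [← Finset.prod_mul_distrib]
    have : ∀ t ∈ Finset.range (N - 1 - k),
        (-(ζ ^ (k + 1) * ζ ^ t)) * (-(ζ ^ (N - 1 - t))) = ζ ^ k := by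
      intro t ht
      have htlt := Finset.mem_range.mp ht
      have h1 : ζ ^ (k + 1) * ζ ^ t * ζ ^ (N - 1 - t) = ζ ^ N * ζ ^ k := by
        rw [← pow_add, ← pow_add, ← pow_add]
        congr 1
        omega
      rw [neg_mul_neg, h1, hζ, one_mul]
    rw [Finset.prod_congr rfl this, Finset.prod_const, Finset.card_range, ← pow_mul]
  rw [hpair]
  have hD : ∏ t ∈ Finset.range k, (-(ζ * ζ ^ t)) = ∏ t ∈ Finset.range k, (-(ζ ^ (t + 1))) := by
    apply Finset.prod_congr rfl
    intro t _
    rw [pow_succ]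
    ring
  have hE : ∏ i ∈ Finset.Icc 1 k, (-(ζ ^ (N - i)))
      = ∏ t ∈ Finset.range k, (-(ζ ^ (N - (1 + t)))) := by
    rw [← Finset.Ico_add_one_right_eq_Icc, Finset.prod_Ico_eq_prod_range]
    simp
  rw [hD, hE, prod_neg_pow, prod_neg_pow, mul_assoc, ← pow_add]
  congr 2
  rw [expsum (N - 1 - k) k]
  apply Finset.sum_congr rfl
  intro t ht
  have := Finset.mem_range.mp ht
  omega

lemma main_abstract (hN : 1 ≤ N) (hζ : ζ ^ N = 1)
    (hprim : ∀ i, 0 < i → i < N → ζ ^ i ≠ 1) :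
    ∑ n ∈ Finset.range N, (∏ i ∈ Finset.Icc 1 n, (-(ζ ^ (N - i)))) * aa ζ n
      = ∑ n ∈ Finset.range N, ζ ^ (n + 1) * (aa ζ n) ^ 2 := by
  symm
  -- Step A: expand one factor of (aa n)^2 by the q-binomial theorem
  have stepA : ∀ n ∈ Finset.range N, ζ ^ (n + 1) * (aa ζ n) ^ 2
      = ∑ k ∈ Finset.range (n + 1),
          ζ ^ (n + 1) * aa ζ n * gb ζ n k * ∏ t ∈ Finset.range k, (-(ζ * ζ ^ t)) := by
    intro n hn
    have hnN := Finset.mem_range.mp hn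
    have h1 : (aa ζ n) ^ 2 = aa ζ n * ∏ i ∈ Finset.range n, (1 - ζ * ζ ^ i) := by
      rw [sq, ← aa_range]
    rw [h1, qbinom hprim n hnN ζ, Finset.mul_sum, Finset.mul_sum]
    apply Finset.sum_congr rfl
    intro k _
    ring
  rw [Finset.sum_congr rfl stepA,
    tri N (fun n k => ζ ^ (n + 1) * aa ζ n * gb ζ n k * ∏ t ∈ Finset.range k, (-(ζ * ζ ^ t)))]
  -- now per k compute the column sum
  apply Finset.sum_congr rfl
  intro k hk
  have hkN := Finset.mem_range.mp hk
  -- Step C/D: rewrite each term and expand P m by qbinom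
  have stepC : ∀ m ∈ Finset.range (N - k),
      ζ ^ (k + m + 1) * aa ζ (k + m) * gb ζ (k + m) k * (∏ t ∈ Finset.range k, (-(ζ * ζ ^ t)))
        = ∑ j ∈ Finset.range (m + 1),
            (∏ t ∈ Finset.range k, (-(ζ * ζ ^ t))) * aa ζ k
              * (ζ ^ (k + m + 1) * gb ζ (k + m) k
                * gb ζ m j * ∏ t ∈ Finset.range j, (-(ζ ^ (k+1) * ζ ^ t))) := by
    intro m hm
    have hmN : m < N - k := Finset.mem_range.mp hm
    have hP := qbinom hprim m (show m < N by omega) (ζ ^ (k+1))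
    calc ζ ^ (k + m + 1) * aa ζ (k + m) * gb ζ (k + m) k * (∏ t ∈ Finset.range k, (-(ζ * ζ ^ t)))
        = (∏ t ∈ Finset.range k, (-(ζ * ζ ^ t))) * aa ζ k
            * (ζ ^ (k + m + 1) * gb ζ (k + m) k
              * (∏ i ∈ Finset.range m, (1 - ζ ^ (k+1) * ζ ^ i))) := by
          rw [aa_split k m]
          ring
      _ = _ := by
          rw [hP, Finset.mul_sum, Finset.mul_sum]
          apply Finset.sum_congr rfl
          intro j _
          ring
  rw [Finset.sum_congr rfl stepC,
    tri (N - k) (fun m j =>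
      (∏ t ∈ Finset.range k, (-(ζ * ζ ^ t))) * aa ζ k
        * (ζ ^ (k + m + 1) * gb ζ (k + m) k
          * gb ζ m j * ∏ t ∈ Finset.range j, (-(ζ ^ (k+1) * ζ ^ t))))]
  -- Step F: per (j,i) rewrite into hockey form
  have stepF : ∀ j ∈ Finset.range (N - k), ∀ i ∈ Finset.range (N - k - j),
      gb ζ (k + (j + i)) k * gb ζ (j + i) j = gb ζ (k + j) j * gb ζ (k + j + i) i := by
    intro j hj i hi
    have hjN : j < N - k := Finset.mem_range.mp hj
    have hiN : i < N - k - j := Finset.mem_range.mp hi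
    have e1 : gb ζ (k + (j + i)) k = aa ζ (k + j + i) / (aa ζ k * aa ζ (j + i)) := by
      rw [gb_of_le (by omega), show k + (j + i) - k = j + i by omega,
        show k + (j + i) = k + j + i by omega]
    have e2 : gb ζ (j + i) j = aa ζ (j + i) / (aa ζ j * aa ζ i) := by
      rw [gb_of_le (by omega), show j + i - j = i by omega]
    have e3 : gb ζ (k + j) j = aa ζ (k + j) / (aa ζ j * aa ζ k) := by
      rw [gb_of_le (by omega), show k + j - j = k by omega]
    have e4 : gb ζ (k + j + i) i = aa ζ (k + j + i) / (aa ζ i * aa ζ (k + j)) := by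
      rw [gb_of_le (by omega), show k + j + i - i = k + j by omega]
    have hak := aa_ne_zero (ζ := ζ) hprim (show k < N by omega)
    have haj := aa_ne_zero (ζ := ζ) hprim (show j < N by omega)
    have hai := aa_ne_zero (ζ := ζ) hprim (show i < N by omega)
    have haji := aa_ne_zero (ζ := ζ) hprim (show j + i < N by omega)
    have hakj := aa_ne_zero (ζ := ζ) hprim (show k + j < N by omega)
    rw [e1, e2, e3, e4]
    field_simp
  -- apply stepF inside the double sum, then collapse with hockey_vanish
  have stepG : ∀ j ∈ Finset.range (N - k),
      ∑ i ∈ Finset.range (N - k - j),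
        (∏ t ∈ Finset.range k, (-(ζ * ζ ^ t))) * aa ζ k
          * (ζ ^ (k + (j + i) + 1) * gb ζ (k + (j + i)) k
            * gb ζ (j + i) j * ∏ t ∈ Finset.range j, (-(ζ ^ (k+1) * ζ ^ t)))
      = (∏ t ∈ Finset.range k, (-(ζ * ζ ^ t))) * aa ζ k
          * (ζ ^ (k + j + 1) * gb ζ (k + j) j * (∏ t ∈ Finset.range j, (-(ζ ^ (k+1) * ζ ^ t))))
          * ∑ i ∈ Finset.range (N - (k + j)), ζ ^ i * gb ζ ((k + j) + i) i := by
    intro j hj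
    have hjN : j < N - k := Finset.mem_range.mp hj
    rw [show N - (k + j) = N - k - j by omega, Finset.mul_sum]
    apply Finset.sum_congr rfl
    intro i hi
    have hF := stepF j hj i hi
    have hz : ζ ^ (k + (j + i) + 1) = ζ ^ (k + j + 1) * ζ ^ i := by
      rw [← pow_add]; congr 1; omega
    rw [hz, show (k + j) + i = k + j + i from rfl]
    calc (∏ t ∈ Finset.range k, (-(ζ * ζ ^ t))) * aa ζ k
          * (ζ ^ (k + j + 1) * ζ ^ i * gb ζ (k + (j + i)) k
            * gb ζ (j + i) j * ∏ t ∈ Finset.range j, (-(ζ ^ (k+1) * ζ ^ t)))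
        = (∏ t ∈ Finset.range k, (-(ζ * ζ ^ t))) * aa ζ k
          * (ζ ^ (k + j + 1) * ζ ^ i * (gb ζ (k + (j + i)) k * gb ζ (j + i) j)
            * ∏ t ∈ Finset.range j, (-(ζ ^ (k+1) * ζ ^ t))) := by ring
      _ = _ := by rw [hF]; ring
  rw [Finset.sum_congr rfl stepG]
  -- collapse: only j = N - 1 - k survives
  rw [Finset.sum_eq_single_of_mem (N - 1 - k)
    (Finset.mem_range.mpr (by omega))
    (by
      intro j hj hne
      have hjN : j < N - k := Finset.mem_range.mp hj
      rw [hockey_vanish hN hζ hprim (k + j) (by omega), mul_zero])]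
  rw [show N - (k + (N - 1 - k)) = 1 by omega, Finset.sum_range_one, pow_zero, one_mul,
    show k + (N - 1 - k) + 0 = N - 1 by omega,
    gb_zero_right hprim (show N - 1 < N by omega), mul_one,
    show k + (N - 1 - k) + 1 = N by omega, hζ, one_mul,
    show k + (N - 1 - k) = N - 1 by omega,
    gbN1 hN hζ hprim (N - 1 - k) (by omega)]
  rw [← Slem hN hζ k hkN]
  ring


end Stmt17Aux

open Stmt17Aux in
theorem stmt17 (N : ℕ) (hN : 1 ≤ N) :
    (∑ n ∈ Finset.range N, ∏ i ∈ Finset.Icc 1 n,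
        (1 - Complex.exp (2 * Real.pi * Complex.I / N) ^ (-(i : ℤ))))
      = ∑ n ∈ Finset.range N,
          Complex.exp (2 * Real.pi * Complex.I / N) ^ (n + 1) *
            (∏ i ∈ Finset.Icc 1 n,
              (1 - Complex.exp (2 * Real.pi * Complex.I / N) ^ i)) ^ 2 := by
  set ζ : ℂ := Complex.exp (2 * Real.pi * Complex.I / N) with hζdef
  have hNC : (N : ℂ) ≠ 0 := Nat.cast_ne_zero.mpr (by omega)
  have hζ : ζ ^ N = 1 := by
    rw [hζdef, ← Complex.exp_nat_mul]
    rw [show (N : ℂ) * (2 * Real.pi * Complex.I / N) = 2 * Real.pi * Complex.I by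
      field_simp]
    exact Complex.exp_two_pi_mul_I
  have hprim : ∀ i, 0 < i → i < N → ζ ^ i ≠ 1 := by
    intro i hi hiN h1
    rw [hζdef, ← Complex.exp_nat_mul, Complex.exp_eq_one_iff] at h1
    obtain ⟨n, hn⟩ := h1
    have h2 : (i : ℂ) = (n : ℂ) * N := by
      field_simp at hn
      have h2pi : (2 : ℂ) * Real.pi * Complex.I ≠ 0 := by
        simp [Real.pi_ne_zero, Complex.I_ne_zero]
      apply mul_right_cancel₀ h2pi
      linear_combination (2 * Real.pi * Complex.I) * hn
    have h3 : (i : ℤ) = n * N := by exact_mod_cast h2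
    have h4 : (N : ℤ) ∣ (i : ℤ) := ⟨n, by linarith⟩
    have h5 := Int.le_of_dvd (by exact_mod_cast hi) h4
    omega
  have hz0 : ζ ≠ 0 := Complex.exp_ne_zero _
  calc ∑ n ∈ Finset.range N, ∏ i ∈ Finset.Icc 1 n, (1 - ζ ^ (-(i : ℤ)))
      = ∑ n ∈ Finset.range N, (∏ i ∈ Finset.Icc 1 n, (-(ζ ^ (N - i)))) * aa ζ n := by
        apply Finset.sum_congr rfl
        intro n hn
        have hnN := Finset.mem_range.mp hn
        rw [aa, ← Finset.prod_mul_distrib]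
        apply Finset.prod_congr rfl
        intro i hi
        have hi' := Finset.mem_Icc.mp hi
        have hNi : ζ ^ (N - i) * ζ ^ i = 1 := by
          rw [← pow_add, show N - i + i = N by omega, hζ]
        have hinv : ζ ^ (-(i : ℤ)) = ζ ^ (N - i) := by
          rw [zpow_neg, zpow_natCast]
          exact inv_eq_of_mul_eq_one_right (by rw [← pow_add, show i + (N - i) = N by omega, hζ])
        rw [hinv]
        linear_combination -hNi
    _ = ∑ n ∈ Finset.range N, ζ ^ (n + 1) * (aa ζ n) ^ 2 := main_abstract hN hζ hprim
    _ = _ := by rfl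
end

section
/- Let q be a complex number with 0 < |q| < 1, let m ≥ 1 be an integer, and let x be a nonzero complex number. Suppose f: ℂ\{0} → ℂ is a function satisfying f(qx) = -xq·f(x) + x^{1-m}q^{1-m} - x^{m+1}q for all x ≠ 0. Then the function f₀(x) := (-1)^{m+1} q^{m(m-1)/2} ∑_{n=-m+1}^{m} (-1)^n q^{-n(n-1)/2} x^n satisfies the same functional equation: f₀(qx) = -xq·f₀(x) + x^{1-m}q^{1-m} - x^{m+1}q for all x ≠ 0. -/
private lemma half_mul (n : ℤ) : 2 * (n * (n - 1) / 2) = n * (n - 1) := by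
  have h : (2:ℤ) ∣ n * (n - 1) := by
    have h := Int.even_mul_succ_self (n - 1)
    rw [sub_add_cancel] at h
    rw [mul_comm] at h
    exact h.two_dvd
  exact Int.mul_ediv_cancel' h

theorem stmt18 (q : ℂ) (hq0 : 0 < ‖q‖) (hq1 : ‖q‖ < 1)
    (m : ℤ) (hm : 1 ≤ m) (f : ℂ → ℂ)
    (hf : ∀ x : ℂ, x ≠ 0 →
      f (q * x) = -x * q * f x + x ^ (1 - m) * q ^ (1 - m) - x ^ (m + 1) * q) :
    ∀ x : ℂ, x ≠ 0 →
      (fun y : ℂ => (-1 : ℂ) ^ (m + 1) * q ^ (m * (m - 1) / 2) *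
          ∑ n ∈ Finset.Icc (-m + 1) m, (-1 : ℂ) ^ n * q ^ (-(n * (n - 1) / 2)) * y ^ n)
        (q * x)
      = -x * q *
          (fun y : ℂ => (-1 : ℂ) ^ (m + 1) * q ^ (m * (m - 1) / 2) *
            ∑ n ∈ Finset.Icc (-m + 1) m, (-1 : ℂ) ^ n * q ^ (-(n * (n - 1) / 2)) * y ^ n) x
        + x ^ (1 - m) * q ^ (1 - m) - x ^ (m + 1) * q := by
  intro x hx
  have hq : q ≠ 0 := by intro h; rw [h] at hq0; simp at hq0
  have hne : (-1 : ℂ) ≠ 0 := by norm_num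
  simp only
  set C : ℂ := (-1:ℂ)^(m+1) * q^(m*(m-1)/2) with hC
  have hterm : ∀ n : ℤ, (-1:ℂ)^n * q^(-(n*(n-1)/2)) * (q*x)^n
      = -(x*q) * ((-1:ℂ)^(n-1) * q^(-((n-1)*(n-1-1)/2)) * x^(n-1)) := by
    intro n
    have e1 : -(n*(n-1)/2) + n = 1 + -((n-1)*(n-1-1)/2) := by
      have h1 := half_mul n
      have h2 := half_mul (n-1)
      have h3 : n*(n-1) = (n-1)*(n-1-1) + 2*n - 2 := by ring
      linarith
    calc (-1:ℂ)^n * q^(-(n*(n-1)/2)) * (q*x)^n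
        = (-1:ℂ)^n * q^(-(n*(n-1)/2) + n) * x^n := by
          rw [mul_zpow, zpow_add₀ hq]; ring
      _ = (-1:ℂ)^(n-1+1) * q^(1 + -((n-1)*(n-1-1)/2)) * x^(n-1+1) := by
          rw [e1, sub_add_cancel]
      _ = -(x*q) * ((-1:ℂ)^(n-1) * q^(-((n-1)*(n-1-1)/2)) * x^(n-1)) := by
          rw [zpow_add₀ hne, zpow_add₀ hq, zpow_add₀ hx, zpow_one, zpow_one, zpow_one]
          ring
  have reidx : (∑ n ∈ Finset.Icc (-m+1) m,
        ((-1:ℂ)^(n-1) * q^(-((n-1)*(n-1-1)/2)) * x^(n-1)))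
      = ∑ n ∈ Finset.Icc (-m) (m-1), ((-1:ℂ)^n * q^(-(n*(n-1)/2)) * x^n) := by
    have hmap : Finset.Icc (-m+1) m
        = Finset.map (addRightEmbedding 1) (Finset.Icc (-m) (m-1)) := by
      rw [Finset.map_add_right_Icc]
      congr 1
      omega
    rw [hmap, Finset.sum_map]
    apply Finset.sum_congr rfl
    intro k _
    simp [addRightEmbedding_apply, add_sub_cancel_right]
  have split1 : Finset.Icc (-m) (m-1) = insert (-m) (Finset.Icc (-m+1) (m-1)) := by
    ext k; simp only [Finset.mem_Icc, Finset.mem_insert]; omega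
  have split2 : Finset.Icc (-m+1) m = insert m (Finset.Icc (-m+1) (m-1)) := by
    ext k; simp only [Finset.mem_Icc, Finset.mem_insert]; omega
  have nm1 : (-m) ∉ Finset.Icc (-m+1) (m-1) := by
    simp only [Finset.mem_Icc, not_and]; omega
  have mm1 : m ∉ Finset.Icc (-m+1) (m-1) := by
    simp only [Finset.mem_Icc, not_and]; omega
  have hB1 : -(x*q) * (C * ((-1:ℂ)^(-m) * q^(-(-m*(-m-1)/2)) * x^(-m)))
      = x^(1-m) * q^(1-m) := by
    have s : (-1:ℂ)^(m+1) * (-1:ℂ)^(-m) * (-1:ℂ)^(1:ℤ) = (-1:ℂ)^(2:ℤ) := by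
      rw [← zpow_add₀ hne, ← zpow_add₀ hne]
      congr 1; ring
    have sx : x^(1:ℤ) * x^(-m) = x^(1-m) := by
      rw [← zpow_add₀ hx, show (1:ℤ) + -m = 1 - m from by ring]
    have sq : q^(1:ℤ) * q^(m*(m-1)/2) * q^(-(-m*(-m-1)/2)) = q^(1-m) := by
      rw [← zpow_add₀ hq, ← zpow_add₀ hq]
      congr 1
      have h1 := half_mul m
      have h2 := half_mul (-m)
      have h3 : -m*(-m-1) = m*(m-1) + 2*m := by ring
      linarith
    calc -(x*q) * (C * ((-1:ℂ)^(-m) * q^(-(-m*(-m-1)/2)) * x^(-m)))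
        = ((-1:ℂ)^(m+1) * (-1:ℂ)^(-m) * (-1:ℂ)^(1:ℤ))
            * ((x^(1:ℤ) * x^(-m)) * (q^(1:ℤ) * q^(m*(m-1)/2) * q^(-(-m*(-m-1)/2)))) := by
          rw [hC, zpow_one, zpow_one, zpow_one]; ring
      _ = (-1:ℂ)^(2:ℤ) * (x^(1-m) * q^(1-m)) := by rw [s, sx, sq]
      _ = x^(1-m) * q^(1-m) := by norm_num
  have hB2 : -(x*q) * (C * ((-1:ℂ)^m * q^(-(m*(m-1)/2)) * x^m))
      = x^(m+1) * q := by
    have s : (-1:ℂ)^(m+1) * (-1:ℂ)^m * (-1:ℂ)^(1:ℤ) = (-1:ℂ)^(2*m+2) := by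
      rw [← zpow_add₀ hne, ← zpow_add₀ hne]
      congr 1; ring
    have s2 : (-1:ℂ)^(2*m+2) = 1 := by
      rw [show (2*m+2) = 2*(m+1) by ring, zpow_mul]
      norm_num
    have sx : x^(1:ℤ) * x^m = x^(m+1) := by
      rw [← zpow_add₀ hx, show (1:ℤ) + m = m + 1 from by ring]
    have sq : q^(1:ℤ) * q^(m*(m-1)/2) * q^(-(m*(m-1)/2)) = q := by
      rw [← zpow_add₀ hq, ← zpow_add₀ hq]
      rw [show (1 + m*(m-1)/2 + -(m*(m-1)/2)) = 1 by ring, zpow_one]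
    calc -(x*q) * (C * ((-1:ℂ)^m * q^(-(m*(m-1)/2)) * x^m))
        = ((-1:ℂ)^(m+1) * (-1:ℂ)^m * (-1:ℂ)^(1:ℤ))
            * ((x^(1:ℤ) * x^m) * (q^(1:ℤ) * q^(m*(m-1)/2) * q^(-(m*(m-1)/2)))) := by
          rw [hC, zpow_one, zpow_one, zpow_one]; ring
      _ = 1 * (x^(m+1) * q) := by rw [s, s2, sx, sq]
      _ = x^(m+1) * q := by rw [one_mul]
  rw [show (∑ n ∈ Finset.Icc (-m+1) m, (-1:ℂ)^n * q^(-(n*(n-1)/2)) * (q*x)^n)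
      = ∑ n ∈ Finset.Icc (-m+1) m,
          -(x*q) * ((-1:ℂ)^(n-1) * q^(-((n-1)*(n-1-1)/2)) * x^(n-1))
    from Finset.sum_congr rfl fun n _ => hterm n]
  rw [← Finset.mul_sum, reidx, split1, Finset.sum_insert nm1, split2,
    Finset.sum_insert mm1]
  linear_combination hB1 - hB2
end
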